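/- Let A ∈ GL₂ℤ, let S_A = {v ∈ ℤ² : ℤv + ℤ(Av) = ℤ²}, and let H_A be the subgroup of GL₂ℤ generated by A and −Id, acting on S_A by matrix multiplication. Suppose S_A is nonempty. If A is not conjugate in GL₂ℤ to (2 1; 1 1) or to −(2 1; 1 1), then H_A acts transitively on S_A; if A is conjugate in GL₂ℤ to (2 1; 1 1) or to −(2 1; 1 1), then the action of H_A on S_A has exactly two orbits. -/

import Mathlib

open Matrix

abbrev GL2Z := GL (Fin 2) ℤ

/-- `S_A = {v ∈ ℤ² : ℤv + ℤ(Av) = ℤ²}`. -/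
def SA (A : GL2Z) : Set (Fin 2 → ℤ) :=
  {v | Submodule.span ℤ {v, (A : Matrix (Fin 2) (Fin 2) ℤ).mulVec v} = ⊤}

/-- `H_A = ⟨A, -Id⟩ ≤ GL₂ℤ`. -/
def HA (A : GL2Z) : Subgroup GL2Z := Subgroup.closure {A, -1}

/-- `v` and `w` lie in the same `H_A`-orbit (for the action by matrix multiplication). -/
def SameOrbit (A : GL2Z) (v w : Fin 2 → ℤ) : Prop :=
  ∃ B ∈ HA A, (B : Matrix (Fin 2) (Fin 2) ℤ).mulVec v = w

/-- `A` is conjugate in `GL₂ℤ` to `(2 1; 1 1)` or to `-(2 1; 1 1)`. -/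
def ConjPM21 (A : GL2Z) : Prop :=
  ∃ P : GL2Z, ((P * A * P⁻¹ : GL2Z) : Matrix (Fin 2) (Fin 2) ℤ) = !![2, 1; 1, 1] ∨
    ((P * A * P⁻¹ : GL2Z) : Matrix (Fin 2) (Fin 2) ℤ) = -!![2, 1; 1, 1]


/-!
For `v ∈ S_A` the vector `v` is cyclic for `A`, so a matrix commuting with `A` is determined by
its value at `v`, and the matrices `a + bA` realise every value. Hence any `v, w ∈ S_A` are related
by a unique `T = a + bA ∈ GL₂ℤ` commuting with `A`, and `v, w` share an orbit iff `T ∈ H_A`,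
which is the group `{±Aᵏ}`. A descent on `|a| + |b|`, multiplying by `A` or `A⁻¹`, shows that
every unit `a + bA` is `±Aᵏ`, unless `det A = 1` and `tr A = ±3`, the case where `A` is conjugate
to `±(2 1; 1 1)`. There the descent gets stuck at the golden ratio `F = A ∓ 1`, which satisfies
`F² = ±A` and `det F = -1`: the units are the `±Fᵏ`, and since `F ∉ H_A` there are two orbits.
-/

local notation "M₂" => Matrix (Fin 2) (Fin 2) ℤ

namespace Matrix

section Cyclic

variable {R n : Type*} [CommRing R] [Fintype n] [DecidableEq n]

theorem eq_of_commute_of_mulVec_eq {A B C : Matrix n n R} {v : n → R}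
    (hv : Submodule.span R {v, A *ᵥ v} = ⊤) (hB : Commute B A) (hC : Commute C A)
    (h : B *ᵥ v = C *ᵥ v) : B = C := by
  refine toLin'.injective (LinearMap.ext_on hv ?_)
  rintro x (rfl | rfl)
  · exact h
  · simp only [toLin'_apply, mulVec_mulVec, hB.eq, hC.eq]
    rw [← mulVec_mulVec, ← mulVec_mulVec, h]

theorem isUnit_iff_span_pair_mulVec_eq_top {A B : Matrix n n R} {v : n → R}
    (hv : Submodule.span R {v, A *ᵥ v} = ⊤) (hAB : Commute A B) :
    IsUnit B ↔ Submodule.span R {B *ᵥ v, A *ᵥ (B *ᵥ v)} = ⊤ := by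
  have himage : B.mulVecLin '' {v, A *ᵥ v} = {B *ᵥ v, A *ᵥ (B *ᵥ v)} := by
    simp only [Set.image_pair, mulVecLin_apply, mulVec_mulVec, hAB.eq]
  rw [← himage, Submodule.span_image, hv, Submodule.map_top, LinearMap.range_eq_top,
    coe_mulVecLin, mulVec_surjective_iff_isUnit]

end Cyclic

section FinTwo

variable {R : Type*} [CommRing R]

theorem mul_self_eq_trace_smul_sub_det_smul (X : Matrix (Fin 2) (Fin 2) R) :
    X * X = X.trace • X - X.det • 1 := by
  ext i j
  fin_cases i <;> fin_cases j <;>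
    simp only [Fin.zero_eta, Fin.mk_one, Fin.isValue, mul_apply, Fin.sum_univ_two, trace_fin_two,
      det_fin_two, sub_apply, smul_apply, smul_eq_mul, one_apply_eq, ne_eq, zero_ne_one,
      one_ne_zero, not_false_eq_true, one_apply_ne] <;> ring

theorem det_smul_one_add_smul_fin_two (a b : R) (X : Matrix (Fin 2) (Fin 2) R) :
    (a • 1 + b • X).det = a ^ 2 + X.trace * a * b + X.det * b ^ 2 := by
  simp only [det_fin_two, trace_fin_two, Fin.isValue, add_apply, smul_apply, smul_eq_mul,
    one_apply_eq, ne_eq, zero_ne_one, one_ne_zero, not_false_eq_true, one_apply_ne]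
  ring

theorem smul_one_add_smul_mul_self_fin_two (a b : R) (X : Matrix (Fin 2) (Fin 2) R) :
    (a • 1 + b • X) * X = (-(b * X.det)) • 1 + (a + b * X.trace) • X := by
  rw [add_mul, smul_mul_assoc, smul_mul_assoc, one_mul, mul_self_eq_trace_smul_sub_det_smul]
  module

theorem isUnit_transpose_of_span_pair_eq_top {v w : Fin 2 → R}
    (h : Submodule.span R {v, w} = ⊤) : IsUnit (of ![v, w])ᵀ := by
  rw [← mulVec_surjective_iff_isUnit, ← coe_mulVecLin, ← LinearMap.range_eq_top,
    range_mulVecLin, of_col, range_cons_cons_empty, h]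

theorem mul_transpose_of_pair_mulVec (A : Matrix (Fin 2) (Fin 2) R) (v : Fin 2 → R) :
    A * (of ![v, A *ᵥ v])ᵀ = (of ![v, A *ᵥ v])ᵀ * !![0, -A.det; 1, A.trace] := by
  ext i j
  fin_cases i <;> fin_cases j <;>
    simp only [Fin.zero_eta, Fin.mk_one, Fin.isValue, mul_apply, Fin.sum_univ_two, mulVec_fin_two,
      transpose_apply, of_apply, cons_val', cons_val_fin_one, cons_val_zero, cons_val_one,
      det_fin_two, trace_fin_two] <;> ring

end FinTwo

end Matrix

namespace Int

theorem sq_eq_sq_of_sq_le_sq_add_one {a b : ℤ} (ha : a ≠ 0) (hb : b ≠ 0)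
    (hab : a ^ 2 ≤ b ^ 2 + 1) (hba : b ^ 2 ≤ a ^ 2 + 1) : a ^ 2 = b ^ 2 := by
  have ha' := one_le_abs ha
  have hb' := one_le_abs hb
  rw [← sq_abs a, ← sq_abs b] at hab hba ⊢
  rcases lt_trichotomy |a| |b| with h | h | h
  · nlinarith
  · rw [h]
  · nlinarith

theorem abs_add_mul_lt_or_abs_add_mul_lt {t d a b : ℤ} (hd : IsUnit d)
    (hN : IsUnit (a ^ 2 + t * a * b + d * b ^ 2)) (ha : a ≠ 0) (hb : b ≠ 0)
    (hexc : ¬ (d = 1 ∧ (t = 3 ∨ t = -3))) :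
    |a + b * t| < |a| ∨ |b + a * d * t| < |b| := by
  set N := a ^ 2 + t * a * b + d * b ^ 2
  have hd2 : d * d = 1 := isUnit_mul_self hd
  by_contra! h
  have ha_le : a ^ 2 ≤ |N - d * b ^ 2| := by
    calc a ^ 2 = |a| * |a| := by rw [abs_mul_abs_self, sq]
      _ ≤ |a| * |a + b * t| := mul_le_mul_of_nonneg_left h.1 (abs_nonneg a)
      _ = |N - d * b ^ 2| := by rw [← abs_mul]; congr 1; ring
  have hb_le : b ^ 2 ≤ |N - a ^ 2| := by
    calc b ^ 2 = |b| * |b| := by rw [abs_mul_abs_self, sq]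
      _ ≤ |b| * |b + a * d * t| := mul_le_mul_of_nonneg_left h.2 (abs_nonneg b)
      _ = |d| * |N - a ^ 2| := by
        rw [← abs_mul, ← abs_mul]; congr 1; linear_combination (-b ^ 2) * hd2
      _ = |N - a ^ 2| := by rw [isUnit_iff_abs_eq.mp hd, one_mul]
  have ha1 : 1 ≤ a ^ 2 := by nlinarith [one_le_abs ha, sq_abs a]
  have hb1 : 1 ≤ b ^ 2 := by nlinarith [one_le_abs hb, sq_abs b]
  -- Except for `d = 1, N = -1`, which forces `a = ±b` and `t = ∓3`, the bounds force
  -- `a² = b² ± 1`.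
  rcases isUnit_iff.mp hd with rfl | rfl <;> rcases isUnit_iff.mp hN with hN1 | hN1 <;>
    rw [hN1] at ha_le hb_le <;> rcases le_abs.mp ha_le with ha_le | ha_le <;>
    rcases le_abs.mp hb_le with hb_le | hb_le <;> try linarith
  · obtain rfl | rfl := sq_eq_sq_iff_eq_or_eq_neg.mp
      (sq_eq_sq_of_sq_le_sq_add_one ha hb (by linarith) (by linarith))
    · have h3 : (t + 2) * a ^ 2 = -1 := by linear_combination hN1
      rcases eq_one_or_neg_one_of_mul_eq_neg_one h3 with h4 | h4
      · nlinarith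
      · exact hexc ⟨rfl, Or.inr (by linarith)⟩
    · have h3 : (2 - t) * b ^ 2 = -1 := by linear_combination hN1
      rcases eq_one_or_neg_one_of_mul_eq_neg_one h3 with h4 | h4
      · nlinarith
      · exact hexc ⟨rfl, Or.inl (by linarith)⟩
  all_goals linarith [sq_eq_sq_of_sq_le_sq_add_one ha hb (by linarith) (by linarith)]

end Int

theorem neg_mem_HA {A B : GL2Z} (hB : B ∈ HA A) : -B ∈ HA A := by
  rw [← neg_one_mul]
  exact mul_mem (Subgroup.subset_closure (by simp)) hB

theorem mem_HA_of_coe_eq_smul {A B T : GL2Z} (hB : B ∈ HA A) {c : ℤ} (hc : IsUnit c)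
    (hT : (T : M₂) = c • (B : M₂)) : T ∈ HA A := by
  rcases Int.isUnit_iff.mp hc with rfl | rfl
  · rwa [show T = B from Units.ext (by simpa using hT)]
  · rw [show T = -B from Units.ext (by simpa using hT)]
    exact neg_mem_HA hB

theorem exists_zpow_of_mem_HA {A B : GL2Z} (hB : B ∈ HA A) :
    ∃ k : ℤ, B = A ^ k ∨ B = -A ^ k := by
  induction hB using Subgroup.closure_induction with
  | mem x hx =>
    rcases hx with rfl | rfl
    · exact ⟨1, .inl (zpow_one x).symm⟩
    · exact ⟨0, .inr (by simp)⟩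
  | one => exact ⟨0, .inl (zpow_zero A).symm⟩
  | mul x y _ _ hx hy =>
    obtain ⟨k, rfl | rfl⟩ := hx <;> obtain ⟨l, rfl | rfl⟩ := hy <;>
      exact ⟨k + l, by simp [_root_.zpow_add]⟩
  | inv x _ hx =>
    obtain ⟨k, rfl | rfl⟩ := hx <;> exact ⟨-k, by simp [_root_.zpow_neg]⟩

theorem commute_of_mem_HA {A B : GL2Z} (hB : B ∈ HA A) : Commute B A := by
  obtain ⟨k, rfl | rfl⟩ := exists_zpow_of_mem_HA hB
  · exact (Commute.refl A).zpow_left k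
  · exact ((Commute.refl A).zpow_left k).neg_left

theorem det_eq_one_of_mem_HA {A B : GL2Z} (hA : (A : M₂).det = 1) (hB : B ∈ HA A) :
    (B : M₂).det = 1 := by
  have hle : HA A ≤ Matrix.GeneralLinearGroup.det.ker := by
    refine (Subgroup.closure_le _).mpr ?_
    rintro _ (rfl | rfl) <;> simp [Units.ext_iff, hA, Matrix.det_neg]
  simpa [Units.ext_iff] using hle hB

theorem mem_HA_or_exists_mul_of_mem_HA {A F T : GL2Z} (hF : F * F = A ∨ F * F = -A)
    (hT : T ∈ HA F) : T ∈ HA A ∨ ∃ B ∈ HA A, T = B * F := by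
  have hF_mem : F * F ∈ HA A := by
    have hA_mem : A ∈ HA A := Subgroup.subset_closure (by simp)
    rcases hF with h | h <;> rw [h]
    exacts [hA_mem, neg_mem_HA hA_mem]
  have hpow (m : ℤ) : F ^ (2 * m) ∈ HA A := by
    rw [_root_.zpow_mul, zpow_two]
    exact zpow_mem hF_mem m
  obtain ⟨k, hk⟩ := exists_zpow_of_mem_HA hT
  obtain ⟨m, rfl | rfl⟩ := Int.even_or_odd' k
  · left
    rcases hk with rfl | rfl
    exacts [hpow m, neg_mem_HA (hpow m)]
  · right
    rcases hk with rfl | rfl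
    · exact ⟨_, hpow m, _root_.zpow_add_one F _⟩
    · exact ⟨_, neg_mem_HA (hpow m), by rw [_root_.zpow_add_one, neg_mul]⟩

theorem mem_HA_of_coe_eq_smul_one_add_smul {X : GL2Z}
    (hX : ¬ ((X : M₂).det = 1 ∧ ((X : M₂).trace = 3 ∨ (X : M₂).trace = -3)))
    (a b : ℤ) (T : GL2Z) (hT : (T : M₂) = a • 1 + b • (X : M₂)) : T ∈ HA X := by
  induction hn : a.natAbs + b.natAbs using Nat.strong_induction_on generalizing a b T with
  | _ n ih =>
  set t := (X : M₂).trace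
  set d := (X : M₂).det
  have hd : IsUnit d := (Matrix.isUnit_iff_isUnit_det _).mp X.isUnit
  have hN : IsUnit (a ^ 2 + t * a * b + d * b ^ 2) := by
    rw [← Matrix.det_smul_one_add_smul_fin_two, ← hT]
    exact (Matrix.isUnit_iff_isUnit_det _).mp T.isUnit
  have hX_mem : X ∈ HA X := Subgroup.subset_closure (by simp)
  rcases eq_or_ne a 0 with rfl | ha
  · exact mem_HA_of_coe_eq_smul hX_mem (by simpa using hN : IsUnit d ∧ IsUnit b).2
      (by simpa using hT)
  rcases eq_or_ne b 0 with rfl | hb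
  · exact mem_HA_of_coe_eq_smul (one_mem _) (by simpa using hN) (by simpa using hT)
  rcases Int.abs_add_mul_lt_or_abs_add_mul_lt hd hN ha hb hX with h | h
  · have hTX : T * X ∈ HA X := by
      refine ih _ ?_ (-(b * d)) (a + b * t) _ ?_ rfl
      · rw [Int.abs_eq_natAbs, Int.abs_eq_natAbs] at h
        rw [Int.natAbs_neg, Int.natAbs_mul, Int.natAbs_of_isUnit hd]
        omega
      · rw [Units.val_mul, hT, Matrix.smul_one_add_smul_mul_self_fin_two]
    simpa using mul_mem hTX (inv_mem hX_mem)
  · have hTX : T * X⁻¹ ∈ HA X := by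
      refine ih _ ?_ (b + a * d * t) (-(a * d)) _ ?_ rfl
      · rw [Int.abs_eq_natAbs, Int.abs_eq_natAbs] at h
        rw [Int.natAbs_neg, Int.natAbs_mul, Int.natAbs_of_isUnit hd]
        omega
      · rw [← X.isUnit.mul_left_inj, ← Units.val_mul, inv_mul_cancel_right, hT,
          Matrix.smul_one_add_smul_mul_self_fin_two]
        congr 2
        · linear_combination -a * Int.isUnit_mul_self hd
        · ring
    simpa using mul_mem hTX hX_mem

theorem exists_coe_eq_smul_one_add_smul_of_mem_SA {A : GL2Z} {v w : Fin 2 → ℤ}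
    (hv : v ∈ SA A) (hw : w ∈ SA A) :
    ∃ (a b : ℤ) (T : GL2Z), (T : M₂) = a • 1 + b • (A : M₂) ∧ (T : M₂) *ᵥ v = w := by
  obtain ⟨a, b, hab⟩ := Submodule.mem_span_pair.mp (hv.symm ▸ Submodule.mem_top : w ∈ _)
  set M : M₂ := a • 1 + b • (A : M₂)
  have hMv : M *ᵥ v = w := by
    simp only [M, add_mulVec, smul_mulVec, one_mulVec, hab]
  have hM : IsUnit M := by
    refine (Matrix.isUnit_iff_span_pair_mulVec_eq_top hv ?_).mpr (hMv ▸ hw)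
    exact ((Commute.one_right _).smul_right a).add_right ((Commute.refl _).smul_right b)
  exact ⟨a, b, hM.unit, rfl, hMv⟩

theorem mulVec_mem_SA {A T : GL2Z} (hT : Commute (T : M₂) A) {v : Fin 2 → ℤ} (hv : v ∈ SA A) :
    (T : M₂) *ᵥ v ∈ SA A :=
  (Matrix.isUnit_iff_span_pair_mulVec_eq_top hv hT.symm).mp T.isUnit

theorem not_sameOrbit_mulVec_of_det_eq_neg_one {A F : GL2Z} (hA : (A : M₂).det = 1)
    (hF : (F : M₂).det = -1) (hFA : Commute (F : M₂) A) {v : Fin 2 → ℤ} (hv : v ∈ SA A) :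
    ¬ SameOrbit A v ((F : M₂) *ᵥ v) := by
  rintro ⟨B, hB, hBv⟩
  have hBF := Matrix.eq_of_commute_of_mulVec_eq hv (commute_of_mem_HA hB).units_val hFA hBv
  have hB_det := det_eq_one_of_mem_HA hA hB
  rw [hBF, hF] at hB_det
  exact absurd hB_det (by decide)

theorem exists_conj_eq_companion_of_mem_SA {A : GL2Z} {v : Fin 2 → ℤ} (hv : v ∈ SA A) :
    ∃ P : GL2Z, ((P⁻¹ * A * P : GL2Z) : M₂) = !![0, -(A : M₂).det; 1, (A : M₂).trace] := by
  have hP := Matrix.isUnit_transpose_of_span_pair_eq_top hv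
  refine ⟨hP.unit, ?_⟩
  rw [Units.val_mul, Units.val_mul, mul_assoc, IsUnit.unit_spec,
    Matrix.mul_transpose_of_pair_mulVec, ← mul_assoc, hP.val_inv_mul, one_mul]

theorem conjPM21_iff_of_mem_SA {A : GL2Z} {v : Fin 2 → ℤ} (hv : v ∈ SA A) :
    ConjPM21 A ↔ (A : M₂).det = 1 ∧ ((A : M₂).trace = 3 ∨ (A : M₂).trace = -3) := by
  constructor
  · rintro ⟨P, hP⟩
    have hdet := Matrix.det_units_conj P (A : M₂)
    have htr := Matrix.trace_units_conj P (A : M₂)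
    simp only [Units.val_mul] at hP
    rcases hP with hP | hP <;> rw [hP] at hdet htr <;>
      simp only [Matrix.det_fin_two_of, Matrix.trace_fin_two_of, Matrix.neg_of, Matrix.neg_cons,
        Matrix.neg_empty] at hdet htr <;> omega
  · rintro ⟨hdet, htr⟩
    obtain ⟨P, hP⟩ := exists_conj_eq_companion_of_mem_SA hv
    rw [hdet] at hP
    rcases htr with htr | htr <;> rw [htr] at hP
    · let R : GL2Z := ⟨!![1, 2; 0, 1], !![1, -2; 0, 1], by decide, by decide⟩
      refine ⟨R * P⁻¹, .inl ?_⟩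
      rw [show R * P⁻¹ * A * (R * P⁻¹)⁻¹ = R * (P⁻¹ * A * P) * R⁻¹ by group, Units.val_mul,
        Units.val_mul, hP]
      decide
    · let R : GL2Z := ⟨!![1, -2; 0, -1], !![1, -2; 0, -1], by decide, by decide⟩
      refine ⟨R * P⁻¹, .inr ?_⟩
      rw [show R * P⁻¹ * A * (R * P⁻¹)⁻¹ = R * (P⁻¹ * A * P) * R⁻¹ by group, Units.val_mul,
        Units.val_mul, hP]
      decide

theorem exists_mul_self_eq_of_trace_eq_three {A : GL2Z} (hdet : (A : M₂).det = 1)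
    (htr : (A : M₂).trace = 3 ∨ (A : M₂).trace = -3) :
    ∃ (F : GL2Z) (c : ℤ), (A : M₂) = F + c • 1 ∧ (F : M₂).det = -1 ∧ (F * F = A ∨ F * F = -A) := by
  obtain ⟨c, hc, htr⟩ : ∃ c : ℤ, (c = 1 ∨ c = -1) ∧ (A : M₂).trace = 3 * c := by
    rcases htr with h | h
    exacts [⟨1, .inl rfl, h⟩, ⟨-1, .inr rfl, h⟩]
  set F₀ := (A : M₂) - c • 1
  have hF₀ : F₀ = (-c) • 1 + (1 : ℤ) • (A : M₂) := by module
  have hdetF : F₀.det = -1 := by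
    rw [hF₀, Matrix.det_smul_one_add_smul_fin_two, htr, hdet]
    rcases hc with rfl | rfl <;> norm_num
  have hsq : F₀ * F₀ = c • (A : M₂) := by
    calc F₀ * F₀ = F₀ * A - c • F₀ := by rw [mul_sub, mul_smul_comm, mul_one]
      _ = c • (A : M₂) := by
        rw [hF₀, Matrix.smul_one_add_smul_mul_self_fin_two, htr, hdet]
        rcases hc with rfl | rfl <;> module
  have hF : IsUnit F₀ := (Matrix.isUnit_iff_isUnit_det _).mpr (by rw [hdetF]; exact isUnit_one.neg)
  refine ⟨hF.unit, c, by simp [F₀], hdetF, ?_⟩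
  rcases hc with rfl | rfl
  · exact .inl (Units.ext (by simpa using hsq))
  · exact .inr (Units.ext (by simpa using hsq))

theorem orbits_of_HA_on_SA (A : GL2Z) (hne : (SA A).Nonempty) :
    (¬ ConjPM21 A → ∀ v ∈ SA A, ∀ w ∈ SA A, SameOrbit A v w) ∧
    (ConjPM21 A →
      ∃ v ∈ SA A, ∃ w ∈ SA A, ¬ SameOrbit A v w ∧
        ∀ u ∈ SA A, SameOrbit A v u ∨ SameOrbit A w u) := by
  obtain ⟨v₀, hv₀⟩ := hne
  refine ⟨fun hA v hv w hw => ?_, fun hA => ?_⟩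
  · obtain ⟨a, b, T, hT, hTv⟩ := exists_coe_eq_smul_one_add_smul_of_mem_SA hv hw
    exact ⟨T, mem_HA_of_coe_eq_smul_one_add_smul ((conjPM21_iff_of_mem_SA hv).not.mp hA) a b T hT,
      hTv⟩
  obtain ⟨hdet, htr⟩ := (conjPM21_iff_of_mem_SA hv₀).mp hA
  obtain ⟨F, c, hAF, hFdet, hFF⟩ := exists_mul_self_eq_of_trace_eq_three hdet htr
  have hFA : Commute (F : M₂) A := by
    rw [hAF]
    exact (Commute.refl _).add_right ((Commute.one_right _).smul_right c)
  refine ⟨v₀, hv₀, _, mulVec_mem_SA hFA hv₀,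
    not_sameOrbit_mulVec_of_det_eq_neg_one hdet hFdet hFA hv₀, fun u hu => ?_⟩
  obtain ⟨a, b, T, hT, rfl⟩ := exists_coe_eq_smul_one_add_smul_of_mem_SA hv₀ hu
  have hTF : T ∈ HA F :=
    mem_HA_of_coe_eq_smul_one_add_smul (by simp [hFdet]) (a + b * c) b T (by rw [hT, hAF]; module)
  rcases mem_HA_or_exists_mul_of_mem_HA hFF hTF with hTA | ⟨B, hB, rfl⟩
  · exact .inl ⟨T, hTA, rfl⟩
  · exact .inr ⟨B, hB, by rw [Units.val_mul, ← mulVec_mulVec]⟩
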